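/- Let Ω be a measurable space, n, d, k natural numbers, and H : Ω → Matrix (Fin n) (Fin d) ℝ a measurable function such that rank(H(ω)) = k for every ω. Then there exist measurable functions K : Ω → Matrix (Fin n) (Fin k) ℝ and V : Ω → Matrix (Fin k) (Fin d) ℝ such that for every ω: H(ω) = K(ω) * V(ω), V(ω) * (V(ω))ᵀ = 1 (the rows of V(ω) are orthonormal), and rank(K(ω)) = k. -/

import Mathlib

/-!
Among the finitely many choices of `k` rows of `H ω`, the linearly independent ones are cut out
by the measurable condition `det (B Bᵀ) ≠ 0`, and some choice works for every `ω` because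
`rank (H ω) = k`. Selecting the first admissible choice is a measurable operation, and
Gram–Schmidt on the selected rows is measurable, so it yields a measurable `V` with orthonormal
rows spanning the row space of `H`. Then `H = (H Vᵀ) V`, and `K = H Vᵀ` has rank `k`.
-/

open Matrix

/-- `Matrix m n ℝ` is definitionally `m → n → ℝ`; equip it with the product
measurable structure. -/
instance matrixMeasurableSpace {m n α : Type*} [MeasurableSpace α] :
    MeasurableSpace (Matrix m n α) :=
  inferInstanceAs (MeasurableSpace (m → n → α))

open MeasureTheory InnerProductSpace Set Submodule

theorem exists_measurable_eq_on_cover {α β ι : Type*} [MeasurableSpace α] [MeasurableSpace β]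
    [Countable ι] {s : ι → Set α} {f : ι → α → β} (hs : ∀ i, MeasurableSet (s i))
    (hf : ∀ i, Measurable (f i)) (hcover : ∀ x, ∃ i, x ∈ s i) :
    ∃ g : α → β, Measurable g ∧ ∀ x, ∃ i, x ∈ s i ∧ g x = f i x := by
  classical
  rcases isEmpty_or_nonempty ι with hι | hι
  · have : IsEmpty α := ⟨fun x => isEmptyElim (hcover x).choose⟩
    exact ⟨isEmptyElim, measurable_of_empty _, isEmptyElim⟩
  obtain ⟨e, he⟩ := exists_surjective_nat ι
  have hcover' : ∀ x, ∃ N, x ∈ s (e N) := fun x =>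
    let ⟨i, hi⟩ := hcover x
    let ⟨N, hN⟩ := he i
    ⟨N, hN ▸ hi⟩
  exact ⟨fun x => f (e (Nat.find (hcover' x))) x,
    Measurable.find (p := fun N x => x ∈ s (e N)) (fun N => hf (e N)) (fun N => hs (e N)) hcover',
    fun x => ⟨_, Nat.find_spec (hcover' x), rfl⟩⟩

section GramSchmidt

variable {α 𝕜 E ι : Type*} [MeasurableSpace α] [RCLike 𝕜] [NormedAddCommGroup E]
  [InnerProductSpace 𝕜 E] [MeasurableSpace E] [BorelSpace E] [SecondCountableTopology E]
  [LinearOrder ι] [LocallyFiniteOrderBot ι] [WellFoundedLT ι]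

theorem measurable_gramSchmidt {f : α → ι → E} (hf : ∀ i, Measurable fun x => f x i) (i : ι) :
    Measurable fun x => gramSchmidt 𝕜 (f x) i := by
  induction i using WellFoundedLT.induction with
  | ind i ih =>
    simp only [gramSchmidt_def 𝕜 (f _) i, starProjection_singleton]
    refine (hf i).sub (Finset.measurable_sum _ fun j hj => ?_)
    have hj := ih j (Finset.mem_Iio.1 hj)
    fun_prop

theorem measurable_gramSchmidtNormed {f : α → ι → E} (hf : ∀ i, Measurable fun x => f x i)
    (i : ι) : Measurable fun x => gramSchmidtNormed 𝕜 (f x) i := by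
  have := measurable_gramSchmidt (𝕜 := 𝕜) hf i
  unfold gramSchmidtNormed
  fun_prop

end GramSchmidt

namespace Matrix

section Measurability

variable {Ω l m n o α : Type*} [MeasurableSpace Ω] [MeasurableSpace α]

theorem measurable_iff_entry {A : Ω → Matrix m n α} :
    Measurable A ↔ ∀ i j, Measurable fun ω => A ω i j :=
  measurable_pi_iff.trans (forall_congr' fun _ => measurable_pi_iff)

theorem _root_.Measurable.matrix_transpose {A : Ω → Matrix m n α} (hA : Measurable A) :
    Measurable fun ω => (A ω)ᵀ :=
  measurable_iff_entry.2 fun i j => measurable_iff_entry.1 hA j i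

theorem _root_.Measurable.matrix_submatrix {A : Ω → Matrix m n α} (hA : Measurable A)
    (r : l → m) (c : o → n) : Measurable fun ω => (A ω).submatrix r c :=
  measurable_iff_entry.2 fun i j => measurable_iff_entry.1 hA (r i) (c j)

theorem _root_.Measurable.matrix_mul [Fintype m] [Mul α] [AddCommMonoid α] [MeasurableMul₂ α]
    [MeasurableAdd₂ α] {A : Ω → Matrix l m α} {B : Ω → Matrix m n α} (hA : Measurable A)
    (hB : Measurable B) : Measurable fun ω => A ω * B ω :=
  measurable_iff_entry.2 fun i j => Finset.measurable_sum _ fun k _ =>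
    (measurable_iff_entry.1 hA i k).mul (measurable_iff_entry.1 hB k j)

theorem _root_.Measurable.matrix_det [Fintype n] [DecidableEq n] [CommRing α] [MeasurableMul₂ α]
    [MeasurableAdd₂ α] {A : Ω → Matrix n n α} (hA : Measurable A) :
    Measurable fun ω => (A ω).det := by
  simp only [det_apply']
  exact Finset.measurable_sum _ fun σ _ =>
    (Finset.measurable_prod _ fun i _ => measurable_iff_entry.1 hA _ _).const_mul _

end Measurability

section RowSpace

variable {l m n K : Type*}

theorem linearIndependent_row_iff_rank_eq_card [Field K] [Fintype m] [Fintype n]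
    {A : Matrix m n K} : LinearIndependent K A.row ↔ A.rank = Fintype.card m := by
  rw [A.rank_eq_finrank_span_row, linearIndependent_iff_card_eq_finrank_span, Set.finrank,
    eq_comm]

theorem linearIndependent_row_iff_det_mul_transpose_ne_zero [Field K] [LinearOrder K]
    [IsStrictOrderedRing K] [Fintype m] [DecidableEq m] [Fintype n] {A : Matrix m n K} :
    LinearIndependent K A.row ↔ (A * Aᵀ).det ≠ 0 := by
  rw [linearIndependent_row_iff_rank_eq_card, ← rank_self_mul_transpose,
    ← linearIndependent_row_iff_rank_eq_card, linearIndependent_rows_iff_isUnit,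
    isUnit_iff_isUnit_det, isUnit_iff_ne_zero]

theorem measurableSet_setOf_linearIndependent_row [Field K] [LinearOrder K]
    [IsStrictOrderedRing K] [MeasurableSpace K] [MeasurableSingletonClass K] [MeasurableMul₂ K]
    [MeasurableAdd₂ K] [Fintype m] [Fintype n] :
    MeasurableSet {A : Matrix m n K | LinearIndependent K A.row} := by
  classical
  simp_rw [linearIndependent_row_iff_det_mul_transpose_ne_zero]
  exact (measurable_id.matrix_mul measurable_id.matrix_transpose).matrix_det
    (measurableSet_singleton 0).compl

theorem exists_linearIndependent_row_submatrix [Field K] [Fintype m] [Fintype n]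
    {A : Matrix m n K} {k : ℕ} (hA : A.rank = k) :
    ∃ σ : Fin k ↪ m, LinearIndependent K (A.submatrix σ id).row := by
  obtain ⟨κ, a, ha, hspan, hli⟩ := exists_linearIndependent' K A.row
  have := Finite.of_injective a ha
  have := Fintype.ofFinite κ
  have hcard : Fintype.card κ = k := by
    rw [← hA, rank_eq_finrank_span_row, ← hspan, finrank_span_eq_card hli]
  let e : Fin k ≃ κ := (Fintype.equivFinOfCardEq hcard).symm
  exact ⟨e.toEmbedding.trans ⟨a, ha⟩, hli.comp e e.injective⟩

theorem span_row_submatrix_eq_of_linearIndependent [Field K] [Fintype m] [Fintype n] [Fintype l]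
    {A : Matrix m n K} {σ : l → m} (hσ : LinearIndependent K (A.submatrix σ id).row)
    (hA : A.rank = Fintype.card l) :
    span K (range (A.submatrix σ id).row) = span K (range A.row) := by
  refine eq_of_le_of_finrank_le (span_mono (range_comp_subset_range σ A)) ?_
  rw [← rank_eq_finrank_span_row, hA, ← linearIndependent_row_iff_rank_eq_card.1 hσ,
    rank_eq_finrank_span_row]

theorem exists_eq_mul_of_span_row_le [CommRing K] [Fintype m] {A : Matrix l n K}
    {V : Matrix m n K} (h : span K (range A.row) ≤ span K (range V.row)) :
    ∃ C : Matrix l m K, A = C * V := by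
  choose C hC using fun i => (h.trans (range_vecMulLinear V).ge) (subset_span ⟨i, rfl⟩)
  exact ⟨of C, ext fun i j => (congrFun (hC i) j).symm⟩

theorem mul_mul_eq_self_of_span_row_le [CommRing K] [Fintype m] [DecidableEq m] [Fintype n]
    {A : Matrix l n K} {V : Matrix m n K} {W : Matrix n m K} (hVW : V * W = 1)
    (h : span K (range A.row) ≤ span K (range V.row)) : A * W * V = A := by
  obtain ⟨C, rfl⟩ := exists_eq_mul_of_span_row_le h
  rw [Matrix.mul_assoc C V, hVW, Matrix.mul_one]

theorem rank_mul_eq_of_mul_mul_eq_self [Field K] [Fintype m] [Fintype n] {A : Matrix l n K}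
    {W : Matrix n m K} {V : Matrix m n K} (h : A * W * V = A) : (A * W).rank = A.rank :=
  le_antisymm (rank_mul_le_left A W) (by simpa only [h] using rank_mul_le_left (A * W) V)

end RowSpace

section OrthonormalizeRows

variable {m n 𝕜 : Type*} [RCLike 𝕜] [LinearOrder m] [LocallyFiniteOrderBot m] [WellFoundedLT m]
  [Fintype n]

variable (𝕜) in
noncomputable def orthonormalizeRows (A : Matrix m n 𝕜) : Matrix m n 𝕜 :=
  of fun i => (gramSchmidtNormed 𝕜 (fun j => WithLp.toLp 2 (A j)) i).ofLp

theorem orthonormalizeRows_mul_conjTranspose [Fintype m] [DecidableEq m] {A : Matrix m n 𝕜}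
    (hA : LinearIndependent 𝕜 A.row) :
    A.orthonormalizeRows 𝕜 * (A.orthonormalizeRows 𝕜)ᴴ = 1 := by
  have hA' : LinearIndependent 𝕜 fun j => WithLp.toLp 2 (A j) :=
    hA.map' (WithLp.linearEquiv 2 𝕜 (n → 𝕜)).symm.toLinearMap
      (WithLp.linearEquiv 2 𝕜 (n → 𝕜)).symm.ker
  ext i j
  have := orthonormal_iff_ite.1 (gramSchmidtNormed_orthonormal hA') j i
  rw [EuclideanSpace.inner_eq_star_dotProduct] at this
  simpa [mul_apply, one_apply, dotProduct, orthonormalizeRows, eq_comm] using this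

theorem span_row_orthonormalizeRows (A : Matrix m n 𝕜) :
    span 𝕜 (range (A.orthonormalizeRows 𝕜).row) = span 𝕜 (range A.row) := by
  let e := (WithLp.linearEquiv 2 𝕜 (n → 𝕜)).toLinearMap
  have hV : range (A.orthonormalizeRows 𝕜).row =
      e '' range (gramSchmidtNormed 𝕜 fun j => WithLp.toLp 2 (A j)) := by
    rw [← range_comp]; rfl
  have hA : range A.row = e '' range fun j => WithLp.toLp 2 (A j) := by
    rw [← range_comp]; rfl
  rw [hV, hA, span_image, span_image, span_gramSchmidtNormed_range, span_gramSchmidt]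

theorem _root_.Measurable.matrix_orthonormalizeRows {Ω : Type*} [MeasurableSpace Ω]
    {A : Ω → Matrix m n 𝕜} (hA : Measurable A) :
    Measurable fun ω => (A ω).orthonormalizeRows 𝕜 := by
  have hrow : ∀ i, Measurable fun ω => WithLp.toLp 2 (A ω i) := fun i =>
    (MeasurableEquiv.toLp 2 (n → 𝕜)).measurable.comp ((measurable_pi_apply i).comp hA)
  exact measurable_pi_lambda _ fun i =>
    (MeasurableEquiv.toLp 2 (n → 𝕜)).symm.measurable.comp (measurable_gramSchmidtNormed (𝕜 := 𝕜) hrow i)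

end OrthonormalizeRows

end Matrix

/-- Measurable-selection form of the factorization: a measurable family of
rank-`k` matrices factors measurably as `H ω = K ω * V ω` with `V ω` having
orthonormal rows and `K ω` of rank `k`. -/
theorem exists_measurable_factorization_orthonormal_rows
    {Ω : Type*} [MeasurableSpace Ω] (n d k : ℕ)
    (H : Ω → Matrix (Fin n) (Fin d) ℝ) (hHmeas : Measurable H)
    (hrank : ∀ ω, (H ω).rank = k) :
    ∃ (K : Ω → Matrix (Fin n) (Fin k) ℝ) (V : Ω → Matrix (Fin k) (Fin d) ℝ),
      Measurable K ∧ Measurable V ∧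
      ∀ ω, H ω = K ω * V ω ∧ V ω * (V ω)ᵀ = 1 ∧ (K ω).rank = k := by
  have hrows (σ : Fin k ↪ Fin n) : Measurable fun ω => (H ω).submatrix σ id :=
    hHmeas.matrix_submatrix σ id
  obtain ⟨V, hVmeas, hV⟩ := exists_measurable_eq_on_cover
    (s := fun σ : Fin k ↪ Fin n => {ω | LinearIndependent ℝ ((H ω).submatrix σ id).row})
    (f := fun σ ω => ((H ω).submatrix σ id).orthonormalizeRows ℝ)
    (fun σ => measurableSet_setOf_linearIndependent_row.preimage (hrows σ))
    (fun σ => (hrows σ).matrix_orthonormalizeRows)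
    (fun ω => exists_linearIndependent_row_submatrix (hrank ω))
  refine ⟨fun ω => H ω * (V ω)ᵀ, V, hHmeas.matrix_mul hVmeas.matrix_transpose, hVmeas,
    fun ω => ?_⟩
  obtain ⟨σ, hσ, hVω⟩ := hV ω
  have horth : V ω * (V ω)ᵀ = 1 := by
    rw [hVω, ← conjTranspose_eq_transpose_of_trivial]
    exact orthonormalizeRows_mul_conjTranspose hσ
  have hspan : span ℝ (range (H ω).row) ≤ span ℝ (range (V ω).row) := by
    rw [hVω, span_row_orthonormalizeRows,
      span_row_submatrix_eq_of_linearIndependent hσ (by rw [hrank, Fintype.card_fin])]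
  have hfac := mul_mul_eq_self_of_span_row_le horth hspan
  exact ⟨hfac.symm, horth, (rank_mul_eq_of_mul_mul_eq_self hfac).trans (hrank ω)⟩
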